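/- (Uniqueness of local solutions, from the proof of Theorem 2.1.) Let Ψ : C([a,b],E) → C([a,b],E) be a locally contracting Volterra operator with constant q < 1. If y₁ is a local solution of y = Ψy on [a,a+γ₁] and y₂ is a local solution on [a,a+γ₂] with γ₁ ≤ γ₂, then y₁(t) = y₂(t) for all t ∈ [a,a+γ₁]. -/

import Mathlib

open Set Filter Topology

noncomputable section

variable {E : Type*} [NormedAddCommGroup E] [NormedSpace ℝ E] [CompleteSpace E]

/-- The partial sup-norm `‖y‖_ξ = sup_{t ∈ [a, a+ξ]} ‖y t‖` on `C([a,b], E)`. -/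
def partNorm (a b ξ : ℝ) (y : C(Set.Icc a b, E)) : ℝ :=
  sSup ((fun t : Set.Icc a b => ‖y t‖) '' {t : Set.Icc a b | (t : ℝ) ≤ a + ξ})

/-- `y₁` and `y₂` agree on `[a, a+ξ]`. -/
def eqUpTo (a b ξ : ℝ) (y₁ y₂ : C(Set.Icc a b, E)) : Prop :=
  ∀ t : Set.Icc a b, (t : ℝ) ≤ a + ξ → y₁ t = y₂ t

/-- A Volterra operator on `C([a,b], E)` (in the sense of Tikhonov). -/
def IsVolterra (a b : ℝ) (Ψ : C(Set.Icc a b, E) → C(Set.Icc a b, E)) : Prop :=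
  ∀ ξ ∈ Set.Ioo (0:ℝ) (b - a), ∀ y₁ y₂ : C(Set.Icc a b, E),
    eqUpTo a b ξ y₁ y₂ → eqUpTo a b ξ (Ψ y₁) (Ψ y₂)

/-- A locally contracting operator with contraction constant `q`. -/
def IsLocallyContracting (a b q : ℝ) (Ψ : C(Set.Icc a b, E) → C(Set.Icc a b, E)) : Prop :=
  ∀ r > (0:ℝ), ∃ δ > (0:ℝ), ∀ y₁ y₂ : C(Set.Icc a b, E),
    partNorm a b (b - a) y₁ ≤ r → partNorm a b (b - a) y₂ ≤ r →
      (partNorm a b δ (Ψ y₁ - Ψ y₂) ≤ q * partNorm a b δ (y₁ - y₂)) ∧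
      (∀ γ ∈ Set.Ioc (0:ℝ) (b - a - δ), eqUpTo a b γ y₁ y₂ →
        partNorm a b (γ + δ) (Ψ y₁ - Ψ y₂) ≤ q * partNorm a b (γ + δ) (y₁ - y₂))

/-- A local solution of `y = Ψ y` on `[a, a+γ]`: a function continuous on `[a, a+γ]`
admitting a continuous extension `y ∈ C([a,b], E)` with `(Ψ y) t = g t` on `[a, a+γ]`. -/
def IsLocalSolution (a b γ : ℝ) (Ψ : C(Set.Icc a b, E) → C(Set.Icc a b, E))
    (g : ℝ → E) : Prop :=
  0 < γ ∧ γ ≤ b - a ∧ ContinuousOn g (Set.Icc a (a + γ)) ∧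
  ∃ y : C(Set.Icc a b, E),
    (∀ t : Set.Icc a b, (t : ℝ) ≤ a + γ → y t = g t) ∧
    (∀ t : Set.Icc a b, (t : ℝ) ≤ a + γ → Ψ y t = g t)

/-- A maximally extended solution of `y = Ψ y` on `[a, a+ζ)`. -/
def IsMaxExtSolution (a b ζ : ℝ) (Ψ : C(Set.Icc a b, E) → C(Set.Icc a b, E))
    (g : ℝ → E) : Prop :=
  0 < ζ ∧ ζ ≤ b - a ∧ (∀ γ ∈ Set.Ioo (0:ℝ) ζ, IsLocalSolution a b γ Ψ g) ∧
  Tendsto (fun γ => sSup ((fun t => ‖g t‖) '' Set.Icc a (a + γ))) (𝓝[<] ζ) atTop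

/-!
Freeze both solutions beyond `a + γ₁`, replacing `y` by `t ↦ y (min t (a + γ₁))`. By the Volterra
property these still solve the equation on `[a, a + γ₁]`, and their difference `d` is constant
beyond `a + γ₁`, so `‖d‖_ρ` is attained on `[a, a + γ₁]`, where `d = Ψ y₁ - Ψ y₂`. Hence any
contraction estimate `‖Ψ y₁ - Ψ y₂‖_ρ ≤ q ‖d‖_ρ` gives `‖d‖_ρ ≤ q ‖d‖_ρ`, i.e. `d = 0` on
`[a, a + ρ]`. Conditions (q1) and (q2) provide such estimates for `ρ = δ` and, once the solutions
agree up to `γ`, for `ρ = γ + δ`; finitely many steps of length `δ` cover `[a, b]`.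
-/

theorem Antitone.step_induction {P : ℝ → Prop} (hP : Antitone P) {δ L : ℝ} (hδ : 0 < δ)
    (h₀ : P δ) (hstep : ∀ γ ∈ Ioc 0 (L - δ), P γ → P (γ + δ)) : P L := by
  have hcover : ∀ n : ℕ, ∀ γ ≤ L, γ ≤ n * δ → P γ := by
    intro n
    induction n with
    | zero => exact fun γ _ hγ => hP (by rw [Nat.cast_zero, zero_mul] at hγ; linarith) h₀
    | succ n ih =>
      intro γ hγL hγn
      by_cases hγδ : γ ≤ δ
      · exact hP hγδ h₀
      · have hprev := ih (γ - δ) (by linarith) (by push_cast at hγn; linarith)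
        simpa using hstep (γ - δ) ⟨by linarith, by linarith⟩ hprev
  obtain ⟨n, hn⟩ := exists_nat_ge (L / δ)
  exact hcover n L le_rfl ((div_le_iff₀ hδ).mp hn)

section

variable {F : Type*} [NormedAddCommGroup F] {a b : ℝ}

lemma partNorm_nonneg (ξ : ℝ) (y : C(Icc a b, F)) : 0 ≤ partNorm a b ξ y :=
  Real.sSup_nonneg (by rintro _ ⟨t, -, rfl⟩; exact norm_nonneg _)

lemma norm_le_partNorm {ξ : ℝ} (y : C(Icc a b, F)) {t : Icc a b} (ht : (t : ℝ) ≤ a + ξ) :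
    ‖y t‖ ≤ partNorm a b ξ y := by
  have hbdd : BddAbove (range fun t : Icc a b => ‖y t‖) :=
    (isCompact_range (continuous_norm.comp y.continuous)).bddAbove
  exact le_csSup (hbdd.mono (image_subset_range _ _)) ⟨t, ht, rfl⟩

lemma partNorm_le {ξ C : ℝ} {y : C(Icc a b, F)} (hC : 0 ≤ C)
    (h : ∀ t : Icc a b, (t : ℝ) ≤ a + ξ → ‖y t‖ ≤ C) : partNorm a b ξ y ≤ C :=
  Real.sSup_le (by rintro _ ⟨t, ht, rfl⟩; exact h t ht) hC

lemma eqUpTo_antitone (y₁ y₂ : C(Icc a b, F)) : Antitone fun ξ => eqUpTo a b ξ y₁ y₂ :=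
  fun _ _ hξ h t ht => h t (ht.trans (by linarith))

lemma eqUpTo_of_partNorm_sub_le_mul {q ρ : ℝ} (hq : q < 1) {y₁ y₂ : C(Icc a b, F)}
    (h : partNorm a b ρ (y₁ - y₂) ≤ q * partNorm a b ρ (y₁ - y₂)) : eqUpTo a b ρ y₁ y₂ := by
  have hzero : partNorm a b ρ (y₁ - y₂) ≤ 0 := by nlinarith [partNorm_nonneg ρ (y₁ - y₂)]
  intro t ht
  have hnorm := (norm_le_partNorm (y₁ - y₂) ht).trans hzero
  simpa [sub_eq_zero] using norm_le_zero_iff.mp hnorm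

/-- `t ↦ min t (a + c)`; the `max a` keeps the value in `[a, b]` when `c < 0`. -/
def clampAt (a b c : ℝ) : C(Icc a b, Icc a b) where
  toFun t := ⟨max a (min t (a + c)), le_max_left _ _,
    max_le (t.2.1.trans t.2.2) ((min_le_left _ _).trans t.2.2)⟩
  continuous_toFun := by fun_prop

lemma clampAt_of_le {c : ℝ} {t : Icc a b} (ht : (t : ℝ) ≤ a + c) : clampAt a b c t = t :=
  Subtype.ext (by simp [clampAt, min_eq_left ht, t.2.1])

lemma coe_clampAt_le_self (c : ℝ) (t : Icc a b) : (clampAt a b c t : ℝ) ≤ t :=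
  max_le t.2.1 (min_le_left _ _)

lemma coe_clampAt_le {c : ℝ} (hc : 0 ≤ c) (t : Icc a b) : (clampAt a b c t : ℝ) ≤ a + c :=
  max_le (by linarith) (min_le_right _ _)

lemma partNorm_le_of_comp_clampAt {c ρ : ℝ} (hc : 0 ≤ c) {y z : C(Icc a b, F)}
    (hy : y.comp (clampAt a b c) = y) (hyz : eqUpTo a b c y z) :
    partNorm a b ρ y ≤ partNorm a b ρ z := by
  refine partNorm_le (partNorm_nonneg ρ z) fun t ht => ?_
  rw [← hy, ContinuousMap.comp_apply, hyz _ (coe_clampAt_le hc t)]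
  exact norm_le_partNorm z ((coe_clampAt_le_self c t).trans ht)

lemma IsVolterra.eqUpTo {Ψ : C(Icc a b, F) → C(Icc a b, F)} (hΨ : IsVolterra a b Ψ)
    {ξ : ℝ} (hξ : 0 < ξ) {y₁ y₂ : C(Icc a b, F)} (h : eqUpTo a b ξ y₁ y₂) :
    eqUpTo a b ξ (Ψ y₁) (Ψ y₂) := by
  rcases lt_or_ge ξ (b - a) with hξb | hξb
  · exact hΨ ξ ⟨hξ, hξb⟩ y₁ y₂ h
  · have : y₁ = y₂ := ContinuousMap.ext fun t => h t (by linarith [t.2.2])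
    exact this ▸ fun _ _ => rfl

lemma IsLocalSolution.exists_frozen {Ψ : C(Icc a b, F) → C(Icc a b, F)} {γ c : ℝ} {g : ℝ → F}
    (h : IsLocalSolution a b γ Ψ g) (hΨ : IsVolterra a b Ψ) (hc : 0 < c) (hcγ : c ≤ γ) :
    ∃ y : C(Icc a b, F), y.comp (clampAt a b c) = y ∧
      ∀ t : Icc a b, (t : ℝ) ≤ a + c → y t = g t ∧ Ψ y t = g t := by
  obtain ⟨-, -, -, y, hy, hΨy⟩ := h
  have hfreeze : eqUpTo a b c (y.comp (clampAt a b c)) y := fun t ht => by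
    simp [clampAt_of_le ht]
  refine ⟨y.comp (clampAt a b c), ?_, fun t ht => ?_⟩
  · ext t
    simp [clampAt_of_le (coe_clampAt_le hc.le t)]
  · have htγ : (t : ℝ) ≤ a + γ := ht.trans (by linarith)
    exact ⟨(hfreeze t ht).trans (hy t htγ),
      (hΨ.eqUpTo hc hfreeze t ht).trans (hΨy t htγ)⟩

end

theorem local_solution_unique_general
    (a b q : ℝ) (hq : q < 1)
    (Ψ : C(Set.Icc a b, E) → C(Set.Icc a b, E))
    (hVol : IsVolterra a b Ψ) (hLC : IsLocallyContracting a b q Ψ)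
    (γ₁ γ₂ : ℝ) (g₁ g₂ : ℝ → E) (hγ : γ₁ ≤ γ₂)
    (h₁ : IsLocalSolution a b γ₁ Ψ g₁) (h₂ : IsLocalSolution a b γ₂ Ψ g₂) :
    ∀ t ∈ Set.Icc a (a + γ₁), g₁ t = g₂ t := by
  have hγ₁ : 0 < γ₁ := h₁.1
  obtain ⟨y₁, hfrozen₁, hy₁⟩ := h₁.exists_frozen hVol hγ₁ le_rfl
  obtain ⟨y₂, hfrozen₂, hy₂⟩ := h₂.exists_frozen hVol hγ₁ hγ
  have hfrozen : (y₁ - y₂).comp (clampAt a b γ₁) = y₁ - y₂ := by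
    rw [ContinuousMap.sub_comp, hfrozen₁, hfrozen₂]
  have hfixed : eqUpTo a b γ₁ (y₁ - y₂) (Ψ y₁ - Ψ y₂) := fun t ht => by
    simp [(hy₁ t ht).1, (hy₁ t ht).2, (hy₂ t ht).1, (hy₂ t ht).2]
  have hcontr : ∀ ρ, partNorm a b ρ (Ψ y₁ - Ψ y₂) ≤ q * partNorm a b ρ (y₁ - y₂) →
      eqUpTo a b ρ y₁ y₂ := fun ρ hρ =>
    eqUpTo_of_partNorm_sub_le_mul hq
      ((partNorm_le_of_comp_clampAt hγ₁.le hfrozen hfixed).trans hρ)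
  set r := max (partNorm a b (b - a) y₁) (partNorm a b (b - a) y₂) + 1
  have hr : 0 < r := lt_add_of_le_of_pos ((partNorm_nonneg _ y₁).trans (le_max_left _ _)) one_pos
  have hr₁ : partNorm a b (b - a) y₁ ≤ r :=
    (le_max_left _ _).trans (le_add_of_nonneg_right zero_le_one)
  have hr₂ : partNorm a b (b - a) y₂ ≤ r :=
    (le_max_right _ _).trans (le_add_of_nonneg_right zero_le_one)
  obtain ⟨δ, hδ, hLCδ⟩ := hLC r hr
  obtain ⟨hq₁, hq₂⟩ := hLCδ y₁ y₂ hr₁ hr₂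
  have hagree : eqUpTo a b (b - a) y₁ y₂ := (eqUpTo_antitone y₁ y₂).step_induction hδ
    (hcontr δ hq₁) fun γ hγ hγagree => hcontr _ (hq₂ γ hγ hγagree)
  intro t ⟨hat, htγ⟩
  have htab : t ∈ Icc a b := ⟨hat, htγ.trans (by linarith [h₁.2.1])⟩
  rw [← (hy₁ ⟨t, htab⟩ htγ).1, ← (hy₂ ⟨t, htab⟩ htγ).1]
  exact hagree _ (show t ≤ a + (b - a) by linarith [htab.2])

/-- Uniqueness of local solutions for a locally contracting Volterra operator. -/
theorem local_solution_unique
    (a b q : ℝ) (hab : a < b) (hq : q < 1)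
    (Ψ : C(Set.Icc a b, E) → C(Set.Icc a b, E))
    (hVol : IsVolterra a b Ψ) (hLC : IsLocallyContracting a b q Ψ)
    (γ₁ γ₂ : ℝ) (g₁ g₂ : ℝ → E) (hγ : γ₁ ≤ γ₂)
    (h₁ : IsLocalSolution a b γ₁ Ψ g₁) (h₂ : IsLocalSolution a b γ₂ Ψ g₂) :
    ∀ t ∈ Set.Icc a (a + γ₁), g₁ t = g₂ t :=
  local_solution_unique_general a b q hq Ψ hVol hLC γ₁ γ₂ g₁ g₂ hγ h₁ h₂
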